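/- arXiv:1708.05584 — 2 statements merged into one kernel-verified Lean document; each statement's English description precedes it below -/
import Mathlib

section
/- If V1 has finite first moment E[V1] < ∞, then sup over 0 ≤ s < t < ∞ of |n^{-1}·Γ_n(s,t] − E[V1]·(F(t) − F(s))| converges to 0 almost surely as n → ∞. -/
/-
A Glivenko–Cantelli argument. For fixed `u`, `n⁻¹ Γ_n(-∞, u]` is an average of the i.i.d.
integrable variables `V_i 1{T_i ≤ u}`, whose mean is `E[V₁] F(u)` by independence of `T₁` and
`V₁`; so by the strong law it converges almost surely, simultaneously for all rational `u` and for
the total mass `n⁻¹ ∑ V_i`. These functions of `u` are monotone and the limit `E[V₁] F` is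
continuous, so Pólya's argument (bracket `u` between finitely many rationals at which `E[V₁] F`
increases by less than `ε`) upgrades this to uniform convergence in `u`. Finally
`n⁻¹ Γ_n(s,t]` is the difference of the values at `t` and `s`.
-/

open MeasureTheory ProbabilityTheory Set Filter Topology

lemma abs_sub_lt_of_mem_Icc {x y xl xu yl yu ε : ℝ} (hx : x ∈ Icc xl xu) (hy : y ∈ Icc yl yu)
    (hl : |xl - yl| < ε) (hu : |xu - yu| < ε) (hy' : yu - yl < ε) : |x - y| < 2 * ε := by
  rw [abs_lt] at hl hu ⊢
  constructor <;> linarith [hx.1, hx.2, hy.1, hy.2]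

lemma ContinuousAt.exists_rat_mem_Ioo_sub_lt {h : ℝ → ℝ} {u ε : ℝ} (hc : ContinuousAt h u)
    (hε : 0 < ε) : ∃ p q : ℚ, u ∈ Ioo (p : ℝ) q ∧ h q - h p < ε := by
  obtain ⟨δ, hδ, hball⟩ := Metric.continuousAt_iff.1 hc (ε / 2) (half_pos hε)
  obtain ⟨p, hp⟩ := exists_rat_btwn (sub_lt_self u hδ)
  obtain ⟨q, hq⟩ := exists_rat_btwn (lt_add_of_pos_right u hδ)
  have hpu := hball (x := p) (by rw [Real.dist_eq, abs_lt]; constructor <;> linarith [hp.1, hp.2])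
  have hqu := hball (x := q) (by rw [Real.dist_eq, abs_lt]; constructor <;> linarith [hq.1, hq.2])
  rw [Real.dist_eq, abs_lt] at hpu hqu
  exact ⟨p, q, ⟨hp.2, hq.1⟩, by linarith [hpu.1, hqu.2]⟩

lemma exists_finite_rat_bracketing {h : ℝ → ℝ} {a b ε : ℝ} (hε : 0 < ε) (hc : Continuous h)
    (ha : Tendsto h atBot (𝓝 a)) (hb : Tendsto h atTop (𝓝 b)) :
    ∃ S : Set ℚ, S.Finite ∧ ∀ u : ℝ,
      (∃ q ∈ S, u ≤ q ∧ h q - a < ε) ∨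
      (∃ p ∈ S, ∃ q ∈ S, p ≤ u ∧ u ≤ q ∧ h q - h p < ε) ∨
      (∃ p ∈ S, p ≤ u ∧ b - h p < ε) := by
  obtain ⟨A₀, hA₀⟩ := eventually_atBot.1 (ha.eventually (Metric.ball_mem_nhds a hε))
  obtain ⟨B₀, hB₀⟩ := eventually_atTop.1 (hb.eventually (Metric.ball_mem_nhds b hε))
  obtain ⟨A, hA⟩ := exists_rat_lt A₀
  obtain ⟨B, hB⟩ := exists_rat_gt B₀
  obtain ⟨R, hR, hRfin, hcover⟩ := isCompact_Icc.elim_finite_subcover_image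
    (b := {r : ℚ × ℚ | h r.2 - h r.1 < ε}) (c := fun r => Ioo (r.1 : ℝ) r.2)
    (fun _ _ => isOpen_Ioo)
    (fun u _ => mem_iUnion₂.2 (by
      obtain ⟨p, q, hu, hpq⟩ := (hc.continuousAt (x := u)).exists_rat_mem_Ioo_sub_lt hε
      exact ⟨(p, q), hpq, hu⟩) : Icc (A : ℝ) B ⊆ _)
  refine ⟨{A, B} ∪ Prod.fst '' R ∪ Prod.snd '' R,
    ((toFinite _).union (hRfin.image _)).union (hRfin.image _), fun u => ?_⟩
  rcases lt_or_ge u A with huA | huA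
  · exact Or.inl ⟨A, by simp, huA.le, (le_abs_self _).trans_lt (hA₀ A hA.le)⟩
  rcases le_or_gt u B with huB | huB
  · obtain ⟨r, hr, hur⟩ := mem_iUnion₂.1 (hcover ⟨huA, huB⟩)
    exact Or.inr (Or.inl ⟨r.1, Or.inl (Or.inr ⟨r, hr, rfl⟩), r.2, Or.inr ⟨r, hr, rfl⟩,
      hur.1.le, hur.2.le, hR hr⟩)
  · refine Or.inr (Or.inr ⟨B, by simp, huB.le, (le_abs_self _).trans_lt ?_⟩)
    rw [← Real.dist_eq, dist_comm]
    exact hB₀ B hB.le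

theorem tendstoUniformly_of_monotone_of_tendsto_rat {g : ℕ → ℝ → ℝ} {h : ℝ → ℝ}
    {lo hi : ℕ → ℝ} {a b : ℝ} (hg : ∀ n, Monotone (g n)) (hlo : ∀ n u, lo n ≤ g n u)
    (hhi : ∀ n u, g n u ≤ hi n) (hmono : Monotone h) (hc : Continuous h)
    (ha : Tendsto h atBot (𝓝 a)) (hb : Tendsto h atTop (𝓝 b))
    (hloa : Tendsto lo atTop (𝓝 a)) (hhib : Tendsto hi atTop (𝓝 b))
    (hrat : ∀ q : ℚ, Tendsto (fun n => g n q) atTop (𝓝 (h q))) :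
    TendstoUniformly g h atTop := by
  rw [Metric.tendstoUniformly_iff]
  intro ε hε
  obtain ⟨S, hSfin, hS⟩ := exists_finite_rat_bracketing (half_pos hε) hc ha hb
  have hloa' := Metric.tendsto_nhds.1 hloa _ (half_pos hε)
  have hhib' := Metric.tendsto_nhds.1 hhib _ (half_pos hε)
  have hS' : ∀ᶠ n in atTop, ∀ q ∈ S, dist (g n q) (h q) < ε / 2 :=
    (eventually_all_finite hSfin).2 fun q _ => Metric.tendsto_nhds.1 (hrat q) _ (half_pos hε)
  filter_upwards [hloa', hhib', hS'] with n hlon hhin hSn u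
  rw [dist_comm, Real.dist_eq, ← mul_div_cancel₀ ε two_ne_zero]
  rcases hS u with ⟨q, hq, huq, hqa⟩ | ⟨p, hp, q, hq, hpu, huq, hpq⟩ | ⟨p, hp, hpu, hbp⟩
  · exact abs_sub_lt_of_mem_Icc ⟨hlo n u, hg n huq⟩ ⟨hmono.le_of_tendsto ha u, hmono huq⟩
      hlon (hSn q hq) hqa
  · exact abs_sub_lt_of_mem_Icc ⟨hg n hpu, hg n huq⟩ ⟨hmono hpu, hmono huq⟩
      (hSn p hp) (hSn q hq) hpq
  · exact abs_sub_lt_of_mem_Icc ⟨hg n hpu, hhi n u⟩ ⟨hmono hpu, hmono.ge_of_tendsto hb u⟩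
      (hSn p hp) hhin hbp

/-- `n⁻¹ Γ_n(-∞, u]` along the sample path `T i ω = t i`, `V i ω = v i`. -/
noncomputable def weightedEmpiricalCDF (t v : ℕ → ℝ) (n : ℕ) (u : ℝ) : ℝ :=
  (∑ i ∈ Finset.range n, if t i ≤ u then v i else 0) / n

section WeightedEmpiricalCDF

variable {t v : ℕ → ℝ}

lemma monotone_weightedEmpiricalCDF (hv : ∀ i, 0 ≤ v i) (n : ℕ) :
    Monotone (weightedEmpiricalCDF t v n) := by
  intro a b hab
  refine div_le_div_of_nonneg_right (Finset.sum_le_sum fun i _ => ?_) n.cast_nonneg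
  split_ifs with ha hb hb
  · exact le_rfl
  · exact absurd (ha.trans hab) hb
  · exact hv i
  · exact le_rfl

lemma weightedEmpiricalCDF_nonneg (hv : ∀ i, 0 ≤ v i) (n : ℕ) (u : ℝ) :
    0 ≤ weightedEmpiricalCDF t v n u :=
  div_nonneg (Finset.sum_nonneg fun i _ => by split_ifs <;> simp [hv i]) n.cast_nonneg

lemma weightedEmpiricalCDF_le (hv : ∀ i, 0 ≤ v i) (n : ℕ) (u : ℝ) :
    weightedEmpiricalCDF t v n u ≤ (∑ i ∈ Finset.range n, v i) / n :=
  div_le_div_of_nonneg_right (Finset.sum_le_sum fun i _ => by split_ifs <;> simp [hv i])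
    n.cast_nonneg

lemma one_div_mul_sum_ite_mem_Ioc {s s' : ℝ} (hss' : s ≤ s') (n : ℕ) :
    1 / (n : ℝ) * (∑ i ∈ Finset.range n, if t i ∈ Ioc s s' then v i else 0) =
      weightedEmpiricalCDF t v n s' - weightedEmpiricalCDF t v n s := by
  have hterm : ∀ i, (if t i ∈ Ioc s s' then v i else 0) =
      (if t i ≤ s' then v i else 0) - (if t i ≤ s then v i else 0) := by
    intro i
    by_cases hs : t i ≤ s
    · simp [hs, hs.trans hss', not_lt.2 hs]
    · simp [hs, not_le.1 hs]
  simp only [weightedEmpiricalCDF, hterm, Finset.sum_sub_distrib, one_div_mul_eq_div, sub_div]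

theorem tendstoUniformly_weightedEmpiricalCDF (hv : ∀ i, 0 ≤ v i) {H : ℝ → ℝ} {c : ℝ}
    (hmono : Monotone H) (hcont : Continuous H)
    (hbot : Tendsto H atBot (𝓝 0)) (htop : Tendsto H atTop (𝓝 c))
    (hrat : ∀ q : ℚ, Tendsto (fun n => weightedEmpiricalCDF t v n q) atTop (𝓝 (H q)))
    (htot : Tendsto (fun n : ℕ => (∑ i ∈ Finset.range n, v i) / n) atTop (𝓝 c)) :
    TendstoUniformly (weightedEmpiricalCDF t v) H atTop :=
  tendstoUniformly_of_monotone_of_tendsto_rat (monotone_weightedEmpiricalCDF hv)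
    (weightedEmpiricalCDF_nonneg hv) (weightedEmpiricalCDF_le hv) hmono hcont hbot htop
    tendsto_const_nhds htot hrat

end WeightedEmpiricalCDF

lemma sSup_abs_sub_interval_mem_Icc {G H : ℝ → ℝ} {δ : ℝ} (hδ : ∀ u, |G u - H u| ≤ δ) :
    sSup {x : ℝ | ∃ s t : ℝ, 0 ≤ s ∧ s < t ∧ x = |(G t - G s) - (H t - H s)|} ∈ Icc 0 (2 * δ) := by
  set D := {x : ℝ | ∃ s t : ℝ, 0 ≤ s ∧ s < t ∧ x = |(G t - G s) - (H t - H s)|}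
  have hD : ∀ x ∈ D, x ≤ 2 * δ := by
    rintro x ⟨s, t, -, -, rfl⟩
    calc |(G t - G s) - (H t - H s)| = |(G t - H t) - (G s - H s)| := by ring_nf
      _ ≤ |G t - H t| + |G s - H s| := abs_sub _ _
      _ ≤ 2 * δ := by linarith [hδ t, hδ s]
  have hmem : |(G 1 - G 0) - (H 1 - H 0)| ∈ D := ⟨0, 1, le_rfl, one_pos, rfl⟩
  exact ⟨(abs_nonneg _).trans (le_csSup ⟨_, hD⟩ hmem), csSup_le ⟨_, hmem⟩ hD⟩

theorem tendsto_sSup_abs_sub_interval {G : ℕ → ℝ → ℝ} {H : ℝ → ℝ}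
    (hGH : TendstoUniformly G H atTop) :
    Tendsto (fun n => sSup {x : ℝ | ∃ s t : ℝ, 0 ≤ s ∧ s < t ∧
      x = |(G n t - G n s) - (H t - H s)|}) atTop (𝓝 0) := by
  rw [Metric.tendsto_nhds]
  intro ε hε
  filter_upwards [Metric.tendstoUniformly_iff.1 hGH (ε / 3) (by positivity)] with n hn
  have hsup := sSup_abs_sub_interval_mem_Icc (G := G n) (H := H) (δ := ε / 3) fun u => by
    rw [abs_sub_comm, ← Real.dist_eq]; exact (hn u).le
  rw [Real.dist_0_eq_abs, abs_of_nonneg hsup.1]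
  linarith [hsup.2]

lemma measurable_ite_fst_le (u : ℝ) : Measurable fun p : ℝ × ℝ => if p.1 ≤ u then p.2 else 0 :=
  Measurable.ite (measurableSet_le measurable_fst measurable_const) measurable_snd measurable_const

section Probability

variable {Ω : Type*} [MeasurableSpace Ω] {μ : Measure Ω}

theorem strong_law_ae_comp {E : Type*} [MeasurableSpace E] {X : ℕ → Ω → E}
    (hindep : Pairwise (Function.onFun (IndepFun · · μ) X))
    (hident : ∀ i, IdentDistrib (X i) (X 0) μ μ)
    {φ : E → ℝ} (hφ : Measurable φ) (hint : Integrable (fun ω => φ (X 0 ω)) μ) :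
    ∀ᵐ ω ∂μ, Tendsto (fun n : ℕ => (∑ i ∈ Finset.range n, φ (X i ω)) / n) atTop
      (𝓝 (∫ ω, φ (X 0 ω) ∂μ)) :=
  strong_law_ae_real (fun i ω => φ (X i ω)) hint (fun _ _ hij => (hindep hij).comp hφ hφ)
    fun i => (hident i).comp hφ

lemma integrable_ite_le {T V : Ω → ℝ} (hT : AEMeasurable T μ) (hV : Integrable V μ) (u : ℝ) :
    Integrable (fun ω => if T ω ≤ u then V ω else 0) μ :=
  hV.mono ((measurable_ite_fst_le u).comp_aemeasurable
      (hT.prodMk hV.aemeasurable)).aestronglyMeasurable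
    (ae_of_all _ fun ω => by split_ifs <;> simp)

lemma integral_ite_le_eq_mul_cdf [IsProbabilityMeasure μ] {T V : Ω → ℝ} (hTV : IndepFun T V μ)
    (hT : AEMeasurable T μ) (hV : AEStronglyMeasurable V μ) (u : ℝ) :
    ∫ ω, (if T ω ≤ u then V ω else 0) ∂μ = (∫ ω, V ω ∂μ) * cdf (μ.map T) u := by
  have := Measure.isProbabilityMeasure_map (μ := μ) hT
  have hind : Measurable ((Iic u).indicator (1 : ℝ → ℝ)) :=
    measurable_one.indicator measurableSet_Iic
  calc ∫ ω, (if T ω ≤ u then V ω else 0) ∂μ = ∫ ω, (Iic u).indicator 1 (T ω) * V ω ∂μ := by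
        congr 1; ext ω; by_cases h : T ω ≤ u <;> simp [h]
    _ = (∫ ω, (Iic u).indicator 1 (T ω) ∂μ) * ∫ ω, V ω ∂μ :=
        (hTV.comp hind measurable_id).integral_fun_mul_eq_mul_integral
          (hind.comp_aemeasurable hT).aestronglyMeasurable hV
    _ = (∫ ω, V ω ∂μ) * cdf (μ.map T) u := by
        rw [← integral_map hT hind.aestronglyMeasurable, integral_indicator_one measurableSet_Iic,
          cdf_eq_real, mul_comm]

end Probability

theorem offered_work_FSLLN_general
    {Ω : Type*} [MeasurableSpace Ω] (P : Measure Ω) [IsProbabilityMeasure P]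
    (T V : ℕ → Ω → ℝ)
    (hident : ∀ i, IdentDistrib (fun ω => (T i ω, V i ω)) (fun ω => (T 0 ω, V 0 ω)) P P)
    (hindep : iIndepFun
      (fun i ω => (T i ω, V i ω)) P)
    (hTV : IndepFun (T 0) (V 0) P)
    (hVnn : ∀ i ω, 0 ≤ V i ω)
    (hV1 : Integrable (V 0) P)
    (F : ℝ → ℝ) (hF : ∀ u, F u = (P {ω | T 0 ω ≤ u}).toReal) (hFcont : Continuous F) :
    ∀ᵐ ω ∂P, Tendsto
      (fun n : ℕ => sSup {x : ℝ | ∃ s t : ℝ, 0 ≤ s ∧ s < t ∧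
        x = |(1 / (n : ℝ)) * (∑ i ∈ Finset.range n, if T i ω ∈ Ioc s t then V i ω else 0)
              - (∫ v, V 0 v ∂P) * (F t - F s)|})
      atTop (nhds 0) := by
  have hT0 : AEMeasurable (T 0) P := measurable_fst.comp_aemeasurable (hident 0).aemeasurable_fst
  have hFcdf : F = cdf (P.map (T 0)) := funext fun u => by
    have := Measure.isProbabilityMeasure_map hT0
    rw [hF, cdf_eq_real, measureReal_def, Measure.map_apply_of_aemeasurable hT0 measurableSet_Iic]
    rfl
  subst hFcdf
  set c := ∫ v, V 0 v ∂P
  have hpair : Pairwise (Function.onFun (IndepFun · · P) fun i ω => (T i ω, V i ω)) :=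
    fun _ _ hij => hindep.indepFun hij
  have hrat (q : ℚ) : ∀ᵐ ω ∂P, Tendsto (fun n => weightedEmpiricalCDF (T · ω) (V · ω) n q)
      atTop (𝓝 (c * cdf (P.map (T 0)) q)) := by
    have := strong_law_ae_comp hpair hident (measurable_ite_fst_le q) (integrable_ite_le hT0 hV1 q)
    rwa [integral_ite_le_eq_mul_cdf hTV hT0 hV1.1] at this
  have htot := strong_law_ae_comp hpair hident measurable_snd hV1
  have hc : 0 ≤ c := integral_nonneg (hVnn 0)
  filter_upwards [ae_all_iff.2 hrat, htot] with ω hqω htotω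
  have hunif := tendstoUniformly_weightedEmpiricalCDF (fun i => hVnn i ω)
    ((cdf _).mono.const_mul hc) (continuous_const.mul hFcont)
    (by simpa using (tendsto_cdf_atBot _).const_mul c)
    (by simpa using (tendsto_cdf_atTop _).const_mul c) hqω htotω
  refine (tendsto_sSup_abs_sub_interval hunif).congr fun n => ?_
  congr 1
  ext x
  refine exists₂_congr fun s t => and_congr_right fun _ => and_congr_right fun hst => ?_
  rw [one_div_mul_sum_ite_mem_Ioc hst.le, mul_sub]

/-- functional strong law of large numbers for the offered work,
uniformly over all intervals `(s,t]`. -/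
theorem offered_work_FSLLN
    {Ω : Type*} [MeasurableSpace Ω] (P : Measure Ω) [IsProbabilityMeasure P]
    (T V : ℕ → Ω → ℝ)
    (hTmeas : ∀ i, Measurable (T i)) (hVmeas : ∀ i, Measurable (V i))
    (hident : ∀ i, IdentDistrib (fun ω => (T i ω, V i ω)) (fun ω => (T 0 ω, V 0 ω)) P P)
    (hindep : iIndepFun
      (fun i ω => (T i ω, V i ω)) P)
    (hTV : IndepFun (T 0) (V 0) P)
    (hTnn : ∀ i ω, 0 ≤ T i ω) (hVnn : ∀ i ω, 0 ≤ V i ω)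
    (hV1 : Integrable (V 0) P)
    (F : ℝ → ℝ) (hF : ∀ u, F u = (P {ω | T 0 ω ≤ u}).toReal) (hFcont : Continuous F) :
    ∀ᵐ ω ∂P, Tendsto
      (fun n : ℕ => sSup {x : ℝ | ∃ s t : ℝ, 0 ≤ s ∧ s < t ∧
        x = |(1 / (n : ℝ)) * (∑ i ∈ Finset.range n, if T i ω ∈ Ioc s t then V i ω else 0)
              - (∫ v, V 0 v ∂P) * (F t - F s)|})
      atTop (nhds 0) :=
  offered_work_FSLLN_general P T V hident hindep hTV hVnn hV1 F hF hFcont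
end

section
/- With the setup of the periodic model with general service and σ_V² < 1 (normalizing E[V1²] = 1), the transient distribution P(Ŵ(t) ≤ λ) = φ(λ,a)·Φ(a) + (2π)^{-1/2}·∫_a^∞ φ(λ − σ_V(p_t−1)x, a)·e^{−x²/2} dx converges as t → ∞ to 1 − Φ(a)·exp(−2λ(λ+a) + 2λ²σ_V²), where φ(λ,a) = 1 − exp(−2λ(λ+a) + 2λ²σ_V²). -/
/-!
The exponent of `φ` satisfies `-2l(l+a) + 2l²σ_V² ≤ a²/(1-σ_V²) - (1-σ_V²)l²`, so `φ(·, a)` is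
bounded and tends to `1` as `|l| → ∞`. For every `x ≠ 0` the argument `λ - σ_V(p_t - 1)x` escapes
to infinity, hence by dominated convergence the integral tends to
`∫_a^∞ e^{-x²/2} dx = √(2π)(1 - Φ(a))`, and the limit follows by algebra.
-/

open MeasureTheory Set Filter

/-- The standard normal cumulative distribution function. -/
noncomputable def stdNormalCDF (x : ℝ) : ℝ :=
  (Real.sqrt (2 * Real.pi))⁻¹ * ∫ u in Iic x, Real.exp (-u ^ 2 / 2)

open Real Topology

theorem exponent_le_sub_mul_sq {s : ℝ} (hs : s < 1) (a l : ℝ) :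
    -(2 * l * (l + a)) + 2 * l ^ 2 * s ≤ a ^ 2 / (1 - s) - (1 - s) * l ^ 2 := by
  have hs' : 0 < 1 - s := by linarith
  rw [div_sub' hs'.ne', le_div_iff₀ hs']
  nlinarith [sq_nonneg ((1 - s) * l + a)]

theorem tendsto_exp_exponent_of_tendsto_sq {α : Type*} {L : Filter α} {s : ℝ} (hs : s < 1)
    (a : ℝ) {u : α → ℝ} (hu : Tendsto (fun i => u i ^ 2) L atTop) :
    Tendsto (fun i => exp (-(2 * u i * (u i + a)) + 2 * u i ^ 2 * s)) L (𝓝 0) := by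
  have hbound : Tendsto (fun i => a ^ 2 / (1 - s) - (1 - s) * u i ^ 2) L atBot :=
    tendsto_atBot_add_const_left L _
      (tendsto_neg_atTop_atBot.comp (hu.const_mul_atTop (by linarith)))
  exact tendsto_of_tendsto_of_tendsto_of_le_of_le tendsto_const_nhds
    (tendsto_exp_atBot.comp hbound) (fun i => (exp_pos _).le)
    (fun i => exp_le_exp.2 (exponent_le_sub_mul_sq hs a (u i)))

theorem tendsto_sub_mul_sq_atTop {α : Type*} {L : Filter α} {m : α → ℝ}
    (hm : Tendsto m L atTop) (b : ℝ) {c : ℝ} (hc : c ≠ 0) :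
    Tendsto (fun i => (b - m i * c) ^ 2) L atTop := by
  have : Tendsto (fun i => c ^ 2 * (m i - b / c) ^ 2) L atTop :=
    ((tendsto_pow_atTop two_ne_zero).comp (tendsto_atTop_add_const_right L _ hm)).const_mul_atTop
      (by positivity)
  refine this.congr fun i => ?_
  field_simp
  ring

theorem integrable_exp_neg_sq_div_two : Integrable fun x : ℝ => exp (-x ^ 2 / 2) := by
  simpa [neg_div, div_eq_inv_mul] using integrable_exp_neg_mul_sq (b := 1 / 2) (by norm_num)

theorem integral_exp_neg_sq_div_two : ∫ x : ℝ, exp (-x ^ 2 / 2) = √(2 * π) := by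
  simpa [neg_div, div_eq_inv_mul] using integral_gaussian (1 / 2)

theorem tendsto_setIntegral_one_sub_exp_exponent_mul_gaussian {α : Type*} {L : Filter α}
    [L.IsCountablyGenerated] {s : ℝ} (hs : s < 1) (a b : ℝ) (S : Set ℝ) {m : α → ℝ}
    (hm : Tendsto m L atTop) :
    Tendsto (fun i => ∫ x in S, (1 - exp (-(2 * (b - m i * x) * ((b - m i * x) + a)) +
        2 * (b - m i * x) ^ 2 * s)) * exp (-x ^ 2 / 2)) L (𝓝 (∫ x in S, exp (-x ^ 2 / 2))) := by
  set C := exp (a ^ 2 / (1 - s))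
  refine tendsto_integral_filter_of_dominated_convergence (fun x => (1 + C) * exp (-x ^ 2 / 2))
    (.of_forall fun i => (by fun_prop : Continuous _).aestronglyMeasurable)
    (.of_forall fun i => .of_forall fun x => ?_)
    ((integrable_exp_neg_sq_div_two.const_mul _).integrableOn) ?_
  · have hexp : exp (-(2 * (b - m i * x) * ((b - m i * x) + a)) + 2 * (b - m i * x) ^ 2 * s) ≤ C :=
      exp_le_exp.2 ((exponent_le_sub_mul_sq hs a _).trans (by nlinarith [sq_nonneg (b - m i * x)]))
    rw [norm_mul, Real.norm_of_nonneg (exp_pos _).le]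
    gcongr
    exact (abs_sub _ _).trans (by simpa [abs_of_pos (exp_pos _)] using hexp)
  · filter_upwards [ae_restrict_of_ae ((countable_singleton (0 : ℝ)).ae_notMem volume)] with x hx
    simpa using ((tendsto_exp_exponent_of_tendsto_sq hs a
      (tendsto_sub_mul_sq_atTop hm b hx)).const_sub 1).mul_const (exp (-x ^ 2 / 2))

theorem stdNormalCDF_add_setIntegral_Ioi (a : ℝ) :
    stdNormalCDF a + (√(2 * π))⁻¹ * ∫ x in Ioi a, exp (-x ^ 2 / 2) = 1 := by
  rw [stdNormalCDF, ← mul_add, intervalIntegral.integral_Iic_add_Ioi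
    integrable_exp_neg_sq_div_two.integrableOn integrable_exp_neg_sq_div_two.integrableOn,
    integral_exp_neg_sq_div_two]
  exact inv_mul_cancel₀ (by positivity)

theorem periodic_workload_transient_to_steady_state_general
    (σV a lam : ℝ) (hσV : 0 < σV) (hσV1 : σV ^ 2 < 1)
    (φf : ℝ → ℝ → ℝ)
    (hφf : ∀ l b : ℝ, φf l b = 1 - Real.exp (-(2 * l * (l + b)) + 2 * l ^ 2 * σV ^ 2)) :
    Tendsto (fun t : ℝ =>
        φf lam a * stdNormalCDF a + (Real.sqrt (2 * Real.pi))⁻¹ *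
          ∫ x in Ioi a, φf (lam - σV * ((⌈t⌉ : ℝ) - 1) * x) a * Real.exp (-x ^ 2 / 2))
      atTop
      (nhds (1 - stdNormalCDF a
        * Real.exp (-(2 * lam * (lam + a)) + 2 * lam ^ 2 * σV ^ 2))) := by
  obtain rfl : φf = fun l b => 1 - exp (-(2 * l * (l + b)) + 2 * l ^ 2 * σV ^ 2) :=
    funext₂ hφf
  have hslope : Tendsto (fun t : ℝ => σV * ((⌈t⌉ : ℝ) - 1)) atTop atTop :=
    (tendsto_atTop_add_const_right _ _
      (tendsto_atTop_mono Int.le_ceil tendsto_id)).const_mul_atTop hσV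
  convert tendsto_const_nhds.add ((tendsto_setIntegral_one_sub_exp_exponent_mul_gaussian
    hσV1 a lam (Ioi a) hslope).const_mul (√(2 * π))⁻¹) using 2
  linear_combination -stdNormalCDF_add_setIntegral_Ioi a

/-- convergence of the transient distribution of the periodic workload to its
steady state: with φ(λ,a) = 1 − exp(−2λ(λ+a) + 2λ²σ_V²) (E[V₁²]=1 normalization) and
p_t = ⌈t⌉, the transient distribution converges to 1 − Φ(a)·exp(−2λ(λ+a) + 2λ²σ_V²). -/
theorem periodic_workload_transient_to_steady_state
    (σV a lam : ℝ) (hσV : 0 < σV) (hσV1 : σV ^ 2 < 1) (ha : 0 < a) (hlam : 0 < lam)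
    (φf : ℝ → ℝ → ℝ)
    (hφf : ∀ l b : ℝ, φf l b = 1 - Real.exp (-(2 * l * (l + b)) + 2 * l ^ 2 * σV ^ 2)) :
    Tendsto (fun t : ℝ =>
        φf lam a * stdNormalCDF a + (Real.sqrt (2 * Real.pi))⁻¹ *
          ∫ x in Ioi a, φf (lam - σV * ((⌈t⌉ : ℝ) - 1) * x) a * Real.exp (-x ^ 2 / 2))
      atTop
      (nhds (1 - stdNormalCDF a
        * Real.exp (-(2 * lam * (lam + a)) + 2 * lam ^ 2 * σV ^ 2))) :=
  periodic_workload_transient_to_steady_state_general σV a lam hσV hσV1 φf hφf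
end
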